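/- arXiv:1409.4156 — 2 statements merged into one kernel-verified Lean document; each statement's English description precedes it below -/
import Mathlib

section
/- Decomposition of N-maps: Let f : S → T be an N-map of truncation posets. Decompose S = ⊔_i S_i and T = ⊔_j T_j into connected components, each isomorphic via |−| to an ordinary truncation set. Then f restricts to maps f_i : S_i → T_{j(i)}, each isomorphic to a map of the form U → ⟨n⟩U given by multiplication by n, where ⟨n⟩U = { t ∈ ℕ : t = e·u for some e | n and u ∈ U }. Moreover, only finitely many components S_i map to each T_j. -/
namespace TP

def IsTPNorm {S : Type*} [PartialOrder S] (ν : S → ℕ) : Prop :=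
  (∀ s, 0 < ν s) ∧
  (∀ s t : S, s ≤ t → ν s ∣ ν t) ∧
  (∀ s t u : S, s ≤ t → t ≤ u → ν u / ν s = (ν u / ν t) * (ν t / ν s)) ∧
  (∀ (s : S) (d : ℕ), d ∣ ν s → ∃! t : S, t ≤ s ∧ ν t = ν s / d) ∧
  (∀ s t t' : S, s ≤ t → s ≤ t' → ν t = ν t' → t = t')

def IsTPMap {S T : Type*} [PartialOrder S] [PartialOrder T] (νS : S → ℕ) (νT : T → ℕ)
    (f : S → T) : Prop :=
  ∀ s₁ s₂ : S, s₁ ≤ s₂ → f s₁ ≤ f s₂ ∧ νT (f s₂) / νT (f s₁) = νS s₂ / νS s₁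

def IsFibration {S T : Type*} [PartialOrder S] [PartialOrder T] (f : S → T) : Prop :=
  ∀ (s : S) (t' : T), f s ≤ t' → ∃ s', s ≤ s' ∧ f s' = t'

def IsTMap {S T : Type*} [PartialOrder S] [PartialOrder T] (νS : S → ℕ) (νT : T → ℕ)
    (f : S → T) : Prop :=
  IsTPMap νS νT f ∧ IsFibration f ∧ ∀ t : T, (f ⁻¹' {t}).Finite

def SameComp {S : Type*} [PartialOrder S] (ν : S → ℕ) (a b : S) : Prop :=
  ∃ i : S, ν i = 1 ∧ i ≤ a ∧ i ≤ b

def hatPreim {S T : Type*} [PartialOrder S] [PartialOrder T] (f : S → T) (t : T) : Set S :=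
  {s | t ≤ f s ∧ ∀ s', s' ≤ s → t ≤ f s' → s' = s}

def IsNMap {S T : Type*} [PartialOrder S] [PartialOrder T] (νS : S → ℕ) (νT : T → ℕ)
    (f : S → T) : Prop :=
  IsTPMap νS νT f ∧
  (∀ (s : S) (t' : T), SameComp νT (f s) t' → ∃ s', SameComp νS s s' ∧ t' ≤ f s') ∧
  ∀ t : T, (hatPreim f t).Finite

noncomputable def ghost {S : Type*} [PartialOrder S] (ν : S → ℕ) {k : Type*} [CommRing k]
    (a : S → k) : S → k :=
  fun s => ∑ᶠ t ∈ {t : S | t ≤ s}, (ν t : k) * a t ^ (ν s / ν t)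

end TP

/-! Above a minimal element `i` of `S`, the map axiom forces `|f s| = n·|s|` with `n = |f i|`,
so `f` is injective there by the uniqueness axiom of the norm. Every `t` in the target component
lies below some `f s` (the N-map axiom), and a divisor of `n·|s|` splits as `e·u` with `e ∣ n` and
`u ∣ |s|`, where `u` is again a norm in the component; conversely `e·u ∣ n·u = |f s|` is the norm
of an element below `f s`. Finally, a minimal `i` with `j ≤ f i` is minimal among all `s` with
`j ≤ f s`, so these `i` form a subset of the finite set `hatPreim f j`. -/

namespace TP

namespace IsTPNorm

variable {S : Type*} [PartialOrder S] {ν : S → ℕ}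

theorem exists_le_norm_eq (h : IsTPNorm ν) {s : S} {d : ℕ} (hd : d ∣ ν s) :
    ∃ t ≤ s, ν t = d := by
  obtain ⟨t, ⟨hts, ht⟩, -⟩ := h.2.2.2.1 s (ν s / d) (Nat.div_dvd_of_dvd hd)
  exact ⟨t, hts, by rw [ht, Nat.div_div_self hd (h.1 s).ne']⟩

theorem exists_le_norm_eq_one (h : IsTPNorm ν) (s : S) : ∃ i ≤ s, ν i = 1 :=
  h.exists_le_norm_eq (one_dvd _)

theorem eq_of_le_of_le_of_norm_eq (h : IsTPNorm ν) {a b c : S} (hac : a ≤ c) (hbc : b ≤ c)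
    (hab : ν a = ν b) : a = b := by
  have hc : ν c ≠ 0 := (h.1 c).ne'
  obtain ⟨t, -, huniq⟩ := h.2.2.2.1 c (ν c / ν a) (Nat.div_dvd_of_dvd (h.2.1 a c hac))
  rw [huniq a ⟨hac, (Nat.div_div_self (h.2.1 a c hac) hc).symm⟩,
    huniq b ⟨hbc, by rw [hab, Nat.div_div_self (h.2.1 b c hbc) hc]⟩]

theorem le_of_le_of_norm_eq_one (h : IsTPNorm ν) {i s c : S} (hi : ν i = 1) (hic : i ≤ c)
    (hsc : s ≤ c) : i ≤ s := by
  obtain ⟨j, hjs, hj⟩ := h.exists_le_norm_eq_one s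
  rwa [← h.eq_of_le_of_le_of_norm_eq (hjs.trans hsc) hic (hj.trans hi.symm)]

theorem sameComp_of_le_of_le (h : IsTPNorm ν) {a b c : S} (hac : a ≤ c) (hbc : b ≤ c) :
    SameComp ν a b := by
  obtain ⟨j, hjc, hj⟩ := h.exists_le_norm_eq_one c
  exact ⟨j, hj, h.le_of_le_of_norm_eq_one hj hjc hac, h.le_of_le_of_norm_eq_one hj hjc hbc⟩

theorem norm_eq_one_of_le (h : IsTPNorm ν) {s i : S} (hsi : s ≤ i) (hi : ν i = 1) : ν s = 1 :=
  Nat.eq_one_of_dvd_one (hi ▸ h.2.1 s i hsi)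

end IsTPNorm

variable {S T : Type*} [PartialOrder S] [PartialOrder T] {νS : S → ℕ} {νT : T → ℕ} {f : S → T}
  {i : S}

namespace IsTPMap

theorem norm_apply_eq_mul (hT : IsTPNorm νT) (hf : IsTPMap νS νT f) (hi : νS i = 1) {s : S}
    (his : i ≤ s) : νT (f s) = νT (f i) * νS s := by
  obtain ⟨hle, hratio⟩ := hf i s his
  rw [hi, Nat.div_one] at hratio
  rw [← hratio, Nat.mul_div_cancel' (hT.2.1 _ _ hle)]

theorem injOn_Ici (hS : IsTPNorm νS) (hT : IsTPNorm νT) (hf : IsTPMap νS νT f)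
    (hi : νS i = 1) : Set.InjOn f (Set.Ici i) := by
  intro s his s' his' hss'
  refine hS.2.2.2.2 i s s' his his' (Nat.eq_of_mul_eq_mul_left (hT.1 (f i)) ?_)
  rw [← hf.norm_apply_eq_mul hT hi his, ← hf.norm_apply_eq_mul hT hi his', hss']

theorem exists_sameComp_norm_eq_mul (hT : IsTPNorm νT) (hf : IsTPMap νS νT f)
    (hi : νS i = 1) {e : ℕ} {s : S} (he : e ∣ νT (f i)) (his : i ≤ s) :
    ∃ t : T, SameComp νT t (f i) ∧ νT t = e * νS s := by
  have hdvd : e * νS s ∣ νT (f s) := by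
    rw [hf.norm_apply_eq_mul hT hi his]
    exact mul_dvd_mul_right he _
  obtain ⟨t, hts, ht⟩ := hT.exists_le_norm_eq hdvd
  exact ⟨t, hT.sameComp_of_le_of_le hts (hf i s his).1, ht⟩

end IsTPMap

namespace IsNMap

theorem exists_le_apply_of_sameComp (hS : IsTPNorm νS) (hf : IsNMap νS νT f) (hi : νS i = 1)
    {t : T} (ht : SameComp νT t (f i)) : ∃ s, i ≤ s ∧ t ≤ f s := by
  obtain ⟨w, hw, hwt, hwfi⟩ := ht
  obtain ⟨s, ⟨j, hj, hji, hjs⟩, hts⟩ := hf.2.1 i t ⟨w, hw, hwfi, hwt⟩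
  exact ⟨s, hS.eq_of_le_of_le_of_norm_eq hji le_rfl (hj.trans hi.symm) ▸ hjs, hts⟩

theorem exists_norm_eq_mul_of_sameComp (hS : IsTPNorm νS) (hT : IsTPNorm νT)
    (hf : IsNMap νS νT f) (hi : νS i = 1) {t : T} (ht : SameComp νT t (f i)) :
    ∃ e u : ℕ, e ∣ νT (f i) ∧ (∃ s : S, i ≤ s ∧ νS s = u) ∧ νT t = e * u := by
  obtain ⟨s, his, hts⟩ := hf.exists_le_apply_of_sameComp hS hi ht
  have hdvd : νT t ∣ νT (f i) * νS s := hf.1.norm_apply_eq_mul hT hi his ▸ hT.2.1 _ _ hts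
  obtain ⟨e, u, he, hu, heu⟩ := Nat.dvd_mul.mp hdvd
  obtain ⟨s', hs's, hs'⟩ := hS.exists_le_norm_eq hu
  exact ⟨e, u, he, ⟨s', hS.le_of_le_of_norm_eq_one hi his hs's, hs'⟩, heu.symm⟩

theorem finite_setOf_norm_eq_one_le_apply (hS : IsTPNorm νS) (hf : IsNMap νS νT f) (j : T) :
    {i : S | νS i = 1 ∧ j ≤ f i}.Finite := by
  refine (hf.2.2 j).subset fun i ⟨hi, hji⟩ => ⟨hji, fun s hsi _ => ?_⟩
  exact hS.eq_of_le_of_le_of_norm_eq hsi le_rfl ((hS.norm_eq_one_of_le hsi hi).trans hi.symm)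

end IsNMap

end TP

/-- Decomposition of N-maps: an N-map multiplies norms on each connected component by
`n = |f i|`, is injective on components, the target component's norms are exactly the
products `e·u` with `e ∣ n` and `u` a norm in the source component (i.e. each
restriction is isomorphic to `U → ⟨n⟩U`, multiplication by `n`), and only finitely
many source components map to each target component. -/
theorem stmt10 {S T : Type*} [PartialOrder S] [PartialOrder T]
    (νS : S → ℕ) (νT : T → ℕ) (hS : TP.IsTPNorm νS) (hT : TP.IsTPNorm νT)
    (f : S → T) (hf : TP.IsNMap νS νT f) :
    (∀ i : S, νS i = 1 → ∀ n : ℕ, n = νT (f i) →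
      (∀ s : S, i ≤ s → νT (f s) = n * νS s) ∧
      Set.InjOn f {s : S | i ≤ s} ∧
      (∀ t : T, TP.SameComp νT t (f i) →
        ∃ e u : ℕ, e ∣ n ∧ (∃ s : S, i ≤ s ∧ νS s = u) ∧ νT t = e * u) ∧
      (∀ e u : ℕ, e ∣ n → (∃ s : S, i ≤ s ∧ νS s = u) →
        ∃ t : T, TP.SameComp νT t (f i) ∧ νT t = e * u)) ∧
    (∀ j : T, νT j = 1 → {i : S | νS i = 1 ∧ j ≤ f i}.Finite) := by
  refine ⟨fun i hi n hn => ?_, fun j _ => hf.finite_setOf_norm_eq_one_le_apply hS j⟩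
  subst hn
  refine ⟨fun s => hf.1.norm_apply_eq_mul hT hi, hf.1.injOn_Ici hS hT hi,
    fun t => hf.exists_norm_eq_mul_of_sameComp hS hT hi, ?_⟩
  rintro e u he ⟨s, his, rfl⟩
  exact hf.1.exists_sameComp_norm_eq_mul hT hi he his
end

section
/- Existence of the additive transfer: Let f : S → T be a T-map of truncation posets and k a commutative ring. Define f^w_⊕ : k^S → k^T by (f^w_⊕⟨x_s⟩)_t = Σ_{s ∈ f⁻¹(t)} (|t|/|s|)·x_s. Then for every (a_s) ∈ W_S(k), the vector f^w_⊕(w(a_s)) lies in the image of the ghost map w : W_T(k) → k^T. Consequently there is a unique natural (in k) map f_⊕ : W_S(k) → W_T(k) covering f^w_⊕ on ghost coordinates. -/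
noncomputable def trGhost {S T : Type*} [PartialOrder S] [PartialOrder T]
    (νS : S → ℕ) (νT : T → ℕ) (f : S → T) {k : Type*} [CommRing k] (x : S → k) : T → k :=
  fun t => ∑ᶠ s ∈ f ⁻¹' {t}, ((νT t / νS s : ℕ) : k) * x s

/-!
Over `R = ℤ[a_s]`, with the Frobenius lifts `φ_p = expand p`, Dwork's lemma holds for truncation
posets: a vector `c : T → R` is a ghost vector as soon as `c t ≡ φ_p (c t') [mod p ^ k]` whenever
`|t| = p |t'|` and `p ^ k ∣ |t|`, the Witt components being found recursively by dividing by `|t|`.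
Ghost vectors satisfy these congruences, and the transfer preserves them: lifting along the
fibration matches the fibre over `t'` with the `s` over `t` such that `p ∣ |s|`, while for `p ∤ |s|`
the coefficient `|t| / |s|` is already divisible by `p ^ k`. The transfer of the generic ghost
vector thus has Witt components, universal polynomials defining `f_⊕`; uniqueness holds since the
ghost map is injective over the torsion-free ring `ℤ[a_s]` and a natural family is determined by
its value at the generic vector.
-/

open MvPolynomial

namespace TP

section Arithmetic

variable {R : Type*} [CommRing R]

theorem natCast_dvd_of_forall_prime_pow_dvd {n : ℕ} (hn : n ≠ 0) {x : R}
    (h : ∀ p k : ℕ, p.Prime → p ^ k ∣ n → ((p ^ k : ℕ) : R) ∣ x) : (n : R) ∣ x := by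
  induction n using Nat.recOnPosPrimePosCoprime with
  | prime_pow p k hp _ => exact h p k hp dvd_rfl
  | zero => exact absurd rfl hn
  | one => simp
  | coprime a b _ _ hab iha ihb =>
    have hcop : IsCoprime (a : R) b := by
      simpa using (Nat.isCoprime_iff_coprime.2 hab).intCast (R := R)
    rw [Nat.cast_mul]
    exact hcop.mul_dvd (iha (left_ne_zero_of_mul hn) fun p k hp hk => h p k hp (hk.mul_right b))
      (ihb (right_ne_zero_of_mul hn) fun p k hp hk => h p k hp (hk.mul_left a))

theorem natCast_prime_pow_dvd_mul {p k a n : ℕ} {x : R} (hp : p.Prime) (h : p ^ k ∣ a * n)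
    (hx : ∀ j, p ^ j ∣ n → ((p ^ j : ℕ) : R) ∣ x) : ((p ^ k : ℕ) : R) ∣ a * x := by
  obtain ⟨d₁, d₂, h₁, h₂, hd⟩ := dvd_mul.1 h
  obtain ⟨j, -, rfl⟩ := (Nat.dvd_prime_pow hp).1 (hd ▸ Dvd.intro_left d₁ rfl)
  rw [hd, Nat.cast_mul]
  exact mul_dvd_mul (Nat.cast_dvd_cast h₁) (hx j h₂)

theorem natCast_prime_pow_dvd_pow_sub_pow {p k m : ℕ} {x y : R} (hp : p.Prime)
    (h : (p : R) ∣ x - y) (hk : p ^ k ∣ p * m) : ((p ^ k : ℕ) : R) ∣ x ^ m - y ^ m := by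
  rcases k with _ | k
  · simp
  obtain ⟨r, rfl⟩ : p ^ k ∣ m := Nat.dvd_of_mul_dvd_mul_left hp.pos (by rwa [← pow_succ'])
  rw [pow_mul, pow_mul, Nat.cast_pow]
  exact (dvd_sub_pow_of_dvd_sub h k).trans (sub_dvd_pow_sub_pow _ _ r)

theorem natCast_dvd_expand_sub_pow {σ : Type*} {p : ℕ} (hp : p.Prime) (φ : MvPolynomial σ ℤ) :
    (p : MvPolynomial σ ℤ) ∣ expand p φ - φ ^ p := by
  have := Fact.mk hp
  rw [← map_natCast C, C_dvd_iff_zmod, map_sub, map_pow, map_expand, expand_zmod, sub_self]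

end Arithmetic

namespace IsTPNorm

variable {S : Type*} [PartialOrder S] {ν : S → ℕ}

theorem pos (hS : IsTPNorm ν) (s : S) : 0 < ν s := hS.1 s

theorem dvd_of_le (hS : IsTPNorm ν) {u s : S} (h : u ≤ s) : ν u ∣ ν s := hS.2.1 u s h

theorem exists_le_norm_eq_s11 (hS : IsTPNorm ν) {s : S} {m : ℕ} (hm : m ∣ ν s) :
    ∃ u ≤ s, ν u = m := by
  obtain ⟨u, hu, -⟩ := hS.2.2.2.1 s (ν s / m) (Nat.div_dvd_of_dvd hm)
  exact ⟨u, hu.1, by rw [hu.2, Nat.div_div_self hm (hS.pos s).ne']⟩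

theorem eq_of_norm_eq_of_le (hS : IsTPNorm ν) {u v s : S} (hu : u ≤ s) (hv : v ≤ s)
    (h : ν u = ν v) : u = v := by
  have hνu : ν u = ν s / (ν s / ν u) :=
    (Nat.div_div_self (hS.dvd_of_le hu) (hS.pos s).ne').symm
  obtain ⟨w, -, hw⟩ := hS.2.2.2.1 s (ν s / ν u) (Nat.div_dvd_of_dvd (hS.dvd_of_le hu))
  rw [hw u ⟨hu, hνu⟩, hw v ⟨hv, h ▸ hνu⟩]

theorem eq_of_norm_eq_of_ge (hS : IsTPNorm ν) {s t t' : S} (ht : s ≤ t) (ht' : s ≤ t')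
    (h : ν t = ν t') : t = t' :=
  hS.2.2.2.2 s t t' ht ht' h

theorem norm_lt_of_lt (hS : IsTPNorm ν) {u s : S} (h : u < s) : ν u < ν s :=
  (Nat.le_of_dvd (hS.pos s) (hS.dvd_of_le h.le)).lt_of_ne fun he =>
    h.ne (hS.eq_of_norm_eq_of_le h.le le_rfl he)

theorem le_of_norm_dvd (hS : IsTPNorm ν) {u t s : S} (hu : u ≤ s) (ht : t ≤ s)
    (h : ν u ∣ ν t) : u ≤ t := by
  obtain ⟨v, hv, hνv⟩ := hS.exists_le_norm_eq_s11 h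
  exact hS.eq_of_norm_eq_of_le (hv.trans ht) hu hνv ▸ hv

theorem finite_Iic (hS : IsTPNorm ν) (s : S) : (Set.Iic s).Finite := by
  refine Set.Finite.of_finite_image ((ν s).divisors.finite_toSet.subset ?_)
    fun u hu v hv => hS.eq_of_norm_eq_of_le hu hv
  rintro - ⟨u, hu, rfl⟩
  exact Nat.mem_divisors.2 ⟨hS.dvd_of_le hu, (hS.pos s).ne'⟩

noncomputable abbrev locallyFiniteOrderBot (hS : IsTPNorm ν) : LocallyFiniteOrderBot S :=
  have := Classical.decEq S
  LocallyFiniteOrderBot.ofIic S (fun s => (hS.finite_Iic s).toFinset)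
    fun _ _ => Set.Finite.mem_toFinset _

theorem wellFoundedLT (hS : IsTPNorm ν) : WellFoundedLT S :=
  ⟨Subrelation.wf (hS.norm_lt_of_lt ·) (InvImage.wf ν wellFounded_lt)⟩

theorem prime_pow_dvd_of_not_le (hS : IsTPNorm ν) {p k : ℕ} {u s s' : S} (hp : p.Prime)
    (hu : u ≤ s) (hs' : s' ≤ s) (hν : ν s = p * ν s') (hus' : ¬u ≤ s') (hk : p ^ k ∣ ν s) :
    p ^ k ∣ ν u := by
  obtain ⟨m, hm⟩ := hS.dvd_of_le hu
  have hpm : ¬p ∣ m := by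
    rintro ⟨m', rfl⟩
    refine hus' (hS.le_of_norm_dvd hu hs' ⟨m', Nat.eq_of_mul_eq_mul_left hp.pos ?_⟩)
    rw [← hν, hm]
    ring
  exact (Nat.Coprime.pow_left k ((Nat.Prime.coprime_iff_not_dvd hp).2 hpm)).dvd_of_dvd_mul_right
    (hm ▸ hk)

end IsTPNorm

section Ghost

variable {S : Type*} [PartialOrder S] [LocallyFiniteOrderBot S] {ν : S → ℕ}
  {R R' : Type*} [CommRing R] [CommRing R']

theorem ghost_eq_sum (a : S → R) (s : S) :
    ghost ν a s = ∑ u ∈ Finset.Iic s, (ν u : R) * a u ^ (ν s / ν u) := by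
  rw [ghost, ← finsum_mem_coe_finset, Finset.coe_Iic]
  rfl

theorem ghost_eq_add_sum_Iio (a : S → R) (s : S) :
    ghost ν a s = ν s * a s + ∑ u ∈ Finset.Iio s, (ν u : R) * a u ^ (ν s / ν u) := by
  rw [ghost_eq_sum, Finset.Iic_eq_cons_Iio, Finset.sum_cons]
  congr 1
  rcases (ν s).eq_zero_or_pos with h | h
  · simp [h]
  · rw [Nat.div_self h, pow_one]

theorem ghost_map (g : R →+* R') (a : S → R) :
    ghost ν (fun u => g (a u)) = fun s => g (ghost ν a s) := by
  funext s
  simp only [ghost_eq_sum, map_sum, map_mul, map_natCast, map_pow]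

theorem ghost_injective [IsAddTorsionFree R] (hS : IsTPNorm ν) :
    Function.Injective (ghost ν : (S → R) → S → R) := by
  have := hS.wellFoundedLT
  intro a b h
  funext s
  induction s using WellFoundedLT.induction with
  | _ s ih =>
    have hs := congrFun h s
    rw [ghost_eq_add_sum_Iio, ghost_eq_add_sum_Iio,
      Finset.sum_congr rfl fun u hu => by rw [ih u (Finset.mem_Iio.1 hu)], add_left_inj,
      ← nsmul_eq_mul, ← nsmul_eq_mul] at hs
    exact nsmul_right_injective (hS.pos s).ne' hs

theorem IsTPNorm.prime_pow_dvd_ghost_sub (hS : IsTPNorm ν) {p k : ℕ} (hp : p.Prime)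
    (φ : R →+* R) (hφ : ∀ x, (p : R) ∣ φ x - x ^ p) (a : S → R) {s s' : S} (hs' : s' ≤ s)
    (hν : ν s = p * ν s') (hk : p ^ k ∣ ν s) :
    ((p ^ k : ℕ) : R) ∣ ghost ν a s - φ (ghost ν a s') := by
  classical
  have hsub : Finset.Iic s' ⊆ Finset.Iic s := Finset.Iic_subset_Iic.2 hs'
  have hexp : ∀ u ∈ Finset.Iic s', ν s / ν u = p * (ν s' / ν u) := fun u hu => by
    rw [hν, Nat.mul_div_assoc p (hS.dvd_of_le (Finset.mem_Iic.1 hu))]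
  rw [ghost_eq_sum, ghost_eq_sum, ← Finset.sum_sdiff hsub, map_sum, add_sub_assoc,
    ← Finset.sum_sub_distrib]
  refine dvd_add (Finset.dvd_sum fun u hu => ?_) (Finset.dvd_sum fun u hu => ?_)
  · obtain ⟨hus, hus'⟩ := Finset.mem_sdiff.1 hu
    have := hS.prime_pow_dvd_of_not_le hp (Finset.mem_Iic.1 hus) hs' hν
      (fun h => hus' (Finset.mem_Iic.2 h)) hk
    exact (Nat.cast_dvd_cast this).mul_right _
  · rw [map_mul, map_natCast, map_pow, ← mul_sub, hexp u hu, pow_mul]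
    refine natCast_prime_pow_dvd_mul hp ?_ fun j hj =>
      natCast_prime_pow_dvd_pow_sub_pow hp (dvd_sub_comm.1 (hφ (a u))) hj
    rwa [← hexp u hu, Nat.mul_div_cancel' (hS.dvd_of_le ((Finset.mem_Iic.1 hu).trans hs'))]

end Ghost

section DworkLemma

variable {T : Type*} [PartialOrder T] [LocallyFiniteOrderBot T] {ν : T → ℕ} {R : Type*} [CommRing R]

attribute [local instance] WellFoundedLT.toWellFoundedRelation in
open Classical in
/-- Solves `ghost ν b = c` recursively, dividing by `ν t`; the value is `0` wherever that
division is impossible. -/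
noncomputable def ghostLift [WellFoundedLT T] (ν : T → ℕ) (c : T → R) (t : T) : R :=
  if h : (ν t : R) ∣ c t - ∑ u : Finset.Iio t, (ν u : R) * ghostLift ν c u ^ (ν t / ν u)
  then h.choose else 0
termination_by t
decreasing_by exact Finset.mem_Iio.1 u.2

theorem natCast_mul_ghostLift [WellFoundedLT T] {c : T → R} {t : T}
    (h : (ν t : R) ∣ c t - ∑ u ∈ Finset.Iio t, (ν u : R) * ghostLift ν c u ^ (ν t / ν u)) :
    ν t * ghostLift ν c t =
      c t - ∑ u ∈ Finset.Iio t, (ν u : R) * ghostLift ν c u ^ (ν t / ν u) := by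
  rw [← Finset.sum_coe_sort] at h ⊢
  rw [ghostLift, dif_pos h]
  exact h.choose_spec.symm

theorem ghost_ghostLift [WellFoundedLT T] (hT : IsTPNorm ν) (φ : ℕ → R →+* R)
    (hφ : ∀ p : ℕ, p.Prime → ∀ x, (p : R) ∣ φ p x - x ^ p) (c : T → R)
    (hc : ∀ p k t t', p.Prime → t' ≤ t → ν t = p * ν t' → p ^ k ∣ ν t →
      ((p ^ k : ℕ) : R) ∣ c t - φ p (c t')) :
    ghost ν (ghostLift ν c) = c := by
  funext t
  induction t using WellFoundedLT.induction with
  | _ t ih =>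
    suffices hdvd : (ν t : R) ∣ c t -
        ∑ u ∈ Finset.Iio t, (ν u : R) * ghostLift ν c u ^ (ν t / ν u) by
      rw [ghost_eq_add_sum_Iio, natCast_mul_ghostLift hdvd, sub_add_cancel]
    refine natCast_dvd_of_forall_prime_pow_dvd (hT.pos t).ne' fun p k hp hk => ?_
    rcases k with _ | k
    · simp
    have hpt : p ∣ ν t := (dvd_pow_self p k.succ_ne_zero).trans hk
    obtain ⟨t', ht', hνt'⟩ := hT.exists_le_norm_eq_s11 (Nat.div_dvd_of_dvd hpt)
    have hν : ν t = p * ν t' := by rw [hνt', Nat.mul_div_cancel' hpt]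
    have ht't : t' < t := ht'.lt_of_ne fun h => by
      have := hT.pos t
      rw [h] at hν
      nlinarith [hp.two_le]
    have hghost := hT.prime_pow_dvd_ghost_sub hp (φ p) (hφ p hp) (ghostLift ν c) ht' hν hk
    rw [ih t' ht't, ghost_eq_add_sum_Iio] at hghost
    have hsplit : c t - ∑ u ∈ Finset.Iio t, (ν u : R) * ghostLift ν c u ^ (ν t / ν u) =
        (c t - φ p (c t')) - (ν t * ghostLift ν c t +
          ∑ u ∈ Finset.Iio t, (ν u : R) * ghostLift ν c u ^ (ν t / ν u) - φ p (c t')) +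
        ν t * ghostLift ν c t := by ring
    rw [hsplit]
    exact dvd_add (dvd_sub (hc p _ t t' hp ht' hν hk) hghost)
      ((Nat.cast_dvd_cast hk).mul_right _)

end DworkLemma

section Transfer

variable {S T : Type*} [PartialOrder S] [PartialOrder T] {νS : S → ℕ} {νT : T → ℕ} {f : S → T}
  {R R' : Type*} [CommRing R] [CommRing R']

theorem trGhost_eq_sum (hfin : ∀ t, (f ⁻¹' {t}).Finite) (x : S → R) (t : T) :
    trGhost νS νT f x t = ∑ s ∈ (hfin t).toFinset, ((νT t / νS s : ℕ) : R) * x s := by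
  rw [trGhost, ← finsum_mem_coe_finset, Set.Finite.coe_toFinset]

theorem trGhost_map (hfin : ∀ t, (f ⁻¹' {t}).Finite) (g : R →+* R') (x : S → R) :
    trGhost νS νT f (fun s => g (x s)) = fun t => g (trGhost νS νT f x t) := by
  funext t
  simp only [trGhost_eq_sum hfin, map_sum, map_mul, map_natCast]

namespace IsTPMap

theorem norm_dvd (hS : IsTPNorm νS) (hT : IsTPNorm νT) (hf : IsTPMap νS νT f) (s : S) :
    νS s ∣ νT (f s) := by
  obtain ⟨u, hu, hνu⟩ := hS.exists_le_norm_eq_s11 (one_dvd (νS s))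
  obtain ⟨hfu, hratio⟩ := hf u s hu
  rw [hνu, Nat.div_one] at hratio
  exact Dvd.intro_left _ (hratio ▸ Nat.mul_div_cancel' (hT.dvd_of_le hfu))

theorem norm_eq_mul_of_le (hS : IsTPNorm νS) (hT : IsTPNorm νT) (hf : IsTPMap νS νT f)
    {s' s : S} (h : s' ≤ s) {p : ℕ} (hν : νT (f s) = p * νT (f s')) : νS s = p * νS s' := by
  have hratio := (hf s' s h).2
  rw [hν, Nat.mul_div_cancel _ (hT.pos _)] at hratio
  rw [hratio, Nat.div_mul_cancel (hS.dvd_of_le h)]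

theorem map_eq_of_le (hS : IsTPNorm νS) (hT : IsTPNorm νT) (hf : IsTPMap νS νT f)
    {s' s : S} (h : s' ≤ s) {p : ℕ} (hνS : νS s = p * νS s') {t' : T} (ht' : t' ≤ f s)
    (hνT : νT (f s) = p * νT t') : f s' = t' := by
  obtain ⟨hle, hratio⟩ := hf s' s h
  have hp : 0 < p := Nat.pos_of_mul_pos_right (hνS ▸ hS.pos s)
  rw [hνS, Nat.mul_div_cancel _ (hS.pos s')] at hratio
  refine hT.eq_of_norm_eq_of_le hle ht' (Nat.eq_of_mul_eq_mul_left hp ?_)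
  rw [← hνT, ← hratio, Nat.div_mul_cancel (hT.dvd_of_le hle)]

end IsTPMap

namespace IsTMap

/-- Lifting along the fibration identifies the fibre over `t'` with the part of the fibre over
`t` whose norms are divisible by `p`. -/
theorem sum_fiber_filter_eq (hS : IsTPNorm νS) (hT : IsTPNorm νT) (hf : IsTMap νS νT f)
    {p : ℕ} (hp : 0 < p) {t t' : T} (ht' : t' ≤ t) (hν : νT t = p * νT t') {up : S → S}
    (hup : ∀ s', f s' = t' → s' ≤ up s' ∧ f (up s') = t) {M : Type*} [AddCommMonoid M]
    (g : S → M) :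
    ∑ s ∈ (hf.2.2 t).toFinset with p ∣ νS s, g s = ∑ s' ∈ (hf.2.2 t').toFinset, g (up s') := by
  have hνup : ∀ s', f s' = t' → νS (up s') = p * νS s' := fun s' hs' => by
    obtain ⟨hle, hfs⟩ := hup s' hs'
    exact hf.1.norm_eq_mul_of_le hS hT hle (by rw [hfs, hs', hν])
  symm
  refine Finset.sum_nbij up (fun s' hs' => ?_) (fun s₁ hs₁ s₂ hs₂ he => ?_) (fun s hs => ?_)
    fun _ _ => rfl
  · simp only [Set.Finite.mem_toFinset, Set.mem_preimage, Set.mem_singleton_iff,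
      Finset.mem_filter] at hs' ⊢
    exact ⟨(hup s' hs').2, Dvd.intro _ (hνup s' hs').symm⟩
  · simp only [Set.Finite.coe_toFinset] at hs₁ hs₂
    refine hS.eq_of_norm_eq_of_le (hup s₁ hs₁).1 (he ▸ (hup s₂ hs₂).1)
      (Nat.eq_of_mul_eq_mul_left hp ?_)
    rw [← hνup s₁ hs₁, ← hνup s₂ hs₂, he]
  · simp only [Finset.coe_filter, Set.Finite.mem_toFinset, Set.mem_preimage,
      Set.mem_singleton_iff, Set.mem_ofPred_eq] at hs
    obtain ⟨hfs, hps⟩ := hs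
    obtain ⟨d, hds, hνd⟩ := hS.exists_le_norm_eq_s11 (Nat.div_dvd_of_dvd hps)
    have hνs : νS s = p * νS d := by rw [hνd, Nat.mul_div_cancel' hps]
    have hfd : f d = t' := hf.1.map_eq_of_le hS hT hds hνs (hfs ▸ ht') (hfs ▸ hν)
    refine ⟨d, by simpa using hfd, hS.eq_of_norm_eq_of_ge (hup d hfd).1 hds ?_⟩
    rw [hνup d hfd, hνs]

theorem prime_pow_dvd_trGhost_sub [LocallyFiniteOrderBot S] (hS : IsTPNorm νS)
    (hT : IsTPNorm νT) (hf : IsTMap νS νT f) {p k : ℕ} (hp : p.Prime) (φ : R →+* R)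
    (hφ : ∀ x, (p : R) ∣ φ x - x ^ p) (a : S → R) {t t' : T} (ht' : t' ≤ t)
    (hν : νT t = p * νT t') (hk : p ^ k ∣ νT t) :
    ((p ^ k : ℕ) : R) ∣
      trGhost νS νT f (ghost νS a) t - φ (trGhost νS νT f (ghost νS a) t') := by
  classical
  have hlift : ∀ s', f s' = t' → ∃ s, s' ≤ s ∧ f s = t := fun s' hs' => hf.2.1 s' t (hs' ▸ ht')
  choose! up hup using hlift
  rw [trGhost_eq_sum hf.2.2, trGhost_eq_sum hf.2.2, map_sum,
    ← Finset.sum_filter_add_sum_filter_not _ (fun s => p ∣ νS s),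
    sum_fiber_filter_eq hS hT hf hp.pos ht' hν hup, add_sub_right_comm, ← Finset.sum_sub_distrib]
  refine dvd_add (Finset.dvd_sum fun s' hs' => ?_) (Finset.dvd_sum fun s hs => ?_)
  · simp only [Set.Finite.mem_toFinset, Set.mem_preimage, Set.mem_singleton_iff] at hs'
    obtain ⟨hle, hfs⟩ := hup s' hs'
    have hνup : νS (up s') = p * νS s' := hf.1.norm_eq_mul_of_le hS hT hle (by rw [hfs, hs', hν])
    have hcoeff : νT t / νS (up s') = νT t' / νS s' := by
      rw [hν, hνup, Nat.mul_div_mul_left _ _ hp.pos]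
    rw [map_mul, map_natCast, hcoeff, ← mul_sub]
    have hdvd : νT t' / νS s' * νS (up s') = νT t := by
      rw [← hcoeff, Nat.div_mul_cancel (hfs ▸ hf.1.norm_dvd hS hT (up s'))]
    exact natCast_prime_pow_dvd_mul hp (by rwa [hdvd])
      fun j hj => hS.prime_pow_dvd_ghost_sub hp φ hφ a hle hνup hj
  · simp only [Finset.mem_filter, Set.Finite.mem_toFinset, Set.mem_preimage,
      Set.mem_singleton_iff] at hs
    obtain ⟨hfs, hps⟩ := hs
    have hdvd : νT t / νS s * νS s = νT t := Nat.div_mul_cancel (hfs ▸ hf.1.norm_dvd hS hT s)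
    have hcop := Nat.Coprime.pow_left k ((Nat.Prime.coprime_iff_not_dvd hp).2 hps)
    exact (Nat.cast_dvd_cast (hcop.dvd_of_dvd_mul_right (by rwa [hdvd]))).mul_right _

end IsTMap

end Transfer

section Naturality

variable {σ τ : Type}

def IsNatural (F : ∀ (k : Type) [CommRing k], (σ → k) → (τ → k)) : Prop :=
  ∀ (k₁ k₂ : Type) [CommRing k₁] [CommRing k₂] (g : k₁ →+* k₂) (a : σ → k₁),
    F k₂ (fun s => g (a s)) = fun t => g (F k₁ a t)

noncomputable def evalFamily (P : τ → MvPolynomial σ ℤ) (k : Type) [CommRing k] (a : σ → k) :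
    τ → k :=
  fun t => aeval (R := ℤ) a (P t)

theorem isNatural_evalFamily (P : τ → MvPolynomial σ ℤ) : IsNatural (evalFamily P) := by
  intro k₁ k₂ _ _ g a
  funext t
  exact (DFunLike.congr_fun (comp_aeval (R := ℤ) a g.toIntAlgHom) (P t)).symm

theorem IsNatural.eq_of_eq_X {F F' : ∀ (k : Type) [CommRing k], (σ → k) → (τ → k)}
    (hF : IsNatural F) (hF' : IsNatural F') (h : F (MvPolynomial σ ℤ) X = F' _ X) : F = F' := by
  funext k _ a
  let g : MvPolynomial σ ℤ →+* k := (aeval (R := ℤ) a).toRingHom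
  have hX : (fun s => g (X s)) = a := funext fun s => aeval_X a s
  calc F k a = F k (fun s => g (X s)) := congrArg (F k) hX.symm
    _ = fun t => g (F _ X t) := hF _ _ g X
    _ = fun t => g (F' _ X t) := by rw [h]
    _ = F' k (fun s => g (X s)) := (hF' _ _ g X).symm
    _ = F' k a := congrArg (F' k) hX

end Naturality

theorem ghost_evalFamily {S T : Type} [PartialOrder S] [PartialOrder T] [LocallyFiniteOrderBot S]
    [LocallyFiniteOrderBot T] {νS : S → ℕ} {νT : T → ℕ} {f : S → T}
    (hfin : ∀ t, (f ⁻¹' {t}).Finite) {P : T → MvPolynomial S ℤ}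
    (hP : ghost νT P = trGhost νS νT f (ghost νS X)) (k : Type) [CommRing k] (a : S → k) :
    ghost νT (evalFamily P k a) = trGhost νS νT f (ghost νS a) := by
  let g : MvPolynomial S ℤ →+* k := (aeval (R := ℤ) a).toRingHom
  have hX : (fun s => g (X s)) = a := funext fun s => aeval_X a s
  calc ghost νT (evalFamily P k a) = fun t => g (ghost νT P t) := ghost_map g P
    _ = fun t => g (trGhost νS νT f (ghost νS X) t) := by rw [hP]
    _ = trGhost νS νT f (fun s => g (ghost νS X s)) := (trGhost_map hfin g _).symm
    _ = trGhost νS νT f (ghost νS a) := by rw [← ghost_map g X, hX]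

end TP

open TP

/-- Existence and uniqueness of the additive transfer `f_⊕` induced by a T-map
`f : S → T`: on ghost coordinates it is `(x_s) ↦ (Σ_{f s = t} (|t|/|s|)·x_s)`,
it lifts to Witt coordinates, and the lift is unique among maps natural in `k`. -/
theorem stmt11 {S T : Type} [PartialOrder S] [PartialOrder T]
    (νS : S → ℕ) (νT : T → ℕ) (hS : TP.IsTPNorm νS) (hT : TP.IsTPNorm νT)
    (f : S → T) (hf : TP.IsTMap νS νT f) :
    (∀ (k : Type) [CommRing k], ∀ a : S → k,
        ∃ b : T → k, TP.ghost νT b = trGhost νS νT f (TP.ghost νS a)) ∧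
    ∃! F : ∀ (k : Type) [CommRing k], (S → k) → (T → k),
      (∀ (k : Type) [CommRing k], ∀ a : S → k,
        TP.ghost νT (F k a) = trGhost νS νT f (TP.ghost νS a)) ∧
      (∀ (k₁ k₂ : Type) [CommRing k₁] [CommRing k₂], ∀ (g : k₁ →+* k₂) (a : S → k₁),
        F k₂ (fun s => g (a s)) = fun t => g (F k₁ a t)) := by
  let := hS.locallyFiniteOrderBot
  let := hT.locallyFiniteOrderBot
  have := hT.wellFoundedLT
  obtain ⟨P, hP⟩ : ∃ P : T → MvPolynomial S ℤ, ghost νT P = trGhost νS νT f (ghost νS X) :=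
    ⟨_, ghost_ghostLift (R := MvPolynomial S ℤ) hT (fun p => (expand p).toRingHom)
      (fun p hp => natCast_dvd_expand_sub_pow hp) _ fun p k t t' hp ht' hν hk =>
        hf.prime_pow_dvd_trGhost_sub hS hT hp _ (natCast_dvd_expand_sub_pow hp) X ht' hν hk⟩
  have hghost := ghost_evalFamily hf.2.2 hP
  refine ⟨fun k _ a => ⟨_, hghost k a⟩, evalFamily P, ⟨hghost, isNatural_evalFamily P⟩, ?_⟩
  rintro F ⟨hFghost, hFnat⟩
  refine IsNatural.eq_of_eq_X hFnat (isNatural_evalFamily P) (ghost_injective hT ?_)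
  rw [hFghost, hghost]
end
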